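/- Suppose k·α ≤ 1 and (2k−1)·α > 1, and let λ > 0 be a constant. Then for every ε with 0 < ε < λ²/2, Φ_n(⌊n·η₁(n)⌋) · exp( (λ²/2 − ε) · n^{(2k−1)α−1}/(ln d)² ) → 0 as n → ∞. -/

import Mathlib

open Filter Finset

/-- Domain size `d = n^α` of Model RB. -/
noncomputable def dRB (α : ℝ) (n : ℕ) : ℝ := (n : ℝ) ^ α

/-- `m = n · ln d`. -/
noncomputable def mRB (α : ℝ) (n : ℕ) : ℝ := (n : ℝ) * Real.log (dRB α n)

/-- `f_n(s) = 1 + (p/(1-p)) (s^k - d^{-k})/(1 - d^{-k})`. -/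
noncomputable def fRB (α p : ℝ) (k n : ℕ) (s : ℝ) : ℝ :=
  1 + (p / (1 - p)) * (s ^ k - dRB α n ^ (-(k : ℝ))) / (1 - dRB α n ^ (-(k : ℝ)))

/-- `B_n(S) = C(n,S) (1/d)^S (1-1/d)^{n-S}`. -/
noncomputable def BRB (α : ℝ) (n S : ℕ) : ℝ :=
  (n.choose S : ℝ) * (1 / dRB α n) ^ S * (1 - 1 / dRB α n) ^ (n - S)

/-- `W_n(S) = f_n(S/n)^{r m}`. -/
noncomputable def WRB (α p r : ℝ) (k n S : ℕ) : ℝ :=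
  fRB α p k n ((S : ℝ) / (n : ℝ)) ^ (r * mRB α n)

/-- `Φ_n(S) = B_n(S) W_n(S)`. -/
noncomputable def PhiRB (α p r : ℝ) (k n S : ℕ) : ℝ := BRB α n S * WRB α p r k n S

/-- `g(s) = -k(k-1)(1-s)s^{k-1}/2`. -/
noncomputable def gRB (k : ℕ) (s : ℝ) : ℝ :=
  -((k : ℝ) * ((k : ℝ) - 1)) * (1 - s) * s ^ (k - 1) / 2

/-- `η₁(n) = 1/d + λ/(n^{1-(k-1)α} ln d)`. -/
noncomputable def eta1 (α lam : ℝ) (k n : ℕ) : ℝ :=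
  1 / dRB α n + lam / ((n : ℝ) ^ (1 - ((k : ℝ) - 1) * α) * Real.log (dRB α n))

/-- First moment `E[X] = d^n (1-p)^{r m}`. -/
noncomputable def E1RB (α p r : ℝ) (n : ℕ) : ℝ := dRB α n ^ n * (1 - p) ^ (r * mRB α n)

/-- Second moment `E[X²]`. -/
noncomputable def E2RB (α p r : ℝ) (k n : ℕ) : ℝ :=
  ∑ S ∈ Finset.range (n + 1),
    dRB α n ^ n * (n.choose S : ℝ) * (dRB α n - 1) ^ (n - S) *
      ((1 - p) * ((S.choose k : ℝ) / (n.choose k : ℝ)) +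
        ((1 - p) ^ 2 - p * (1 - p) * dRB α n ^ (-(k : ℝ)) / (1 - dRB α n ^ (-(k : ℝ)))) *
          (1 - (S.choose k : ℝ) / (n.choose k : ℝ))) ^ (r * mRB α n)

/-!
Chernoff's bound with tilt `θ = λ n^(kα-1) / ln d`, chosen so that `η₁ = (1 + θ) / d`, bounds the
binomial weight at `S = ⌊n η₁⌋`, which lies `θ n / d` above the mean `n / d`, by
`exp (θ - (1/2 - θ) θ² n / d) = exp (θ - (1/2 - θ) λ² n^((2k-1)α-1) / (ln d)²)`.
Since `kα ≤ 1`, `θ → 0`. At that `S`, `f_n(S/n) - 1 = O(θ d^(-k)) = O(1 / (n ln d))`, so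
`W_n(S) = f_n(S/n)^(r n ln d)` stays bounded, and what is left of the product is
`exp (-(ε - o(1)) n^((2k-1)α-1) / (ln d)²) → 0`, as `(2k-1)α > 1`.
-/

open Filter Real

lemma Real.exp_le_one_add_add_sq_div_two_add_pow_three {x : ℝ} (hx0 : 0 ≤ x) (hx1 : x ≤ 1) :
    exp x ≤ 1 + x + x ^ 2 / 2 + x ^ 3 := by
  have h := Real.exp_bound' hx0 hx1 (n := 3) (by norm_num)
  norm_num [Finset.sum_range_succ, Nat.factorial] at h
  nlinarith [pow_nonneg hx0 3]

lemma Real.rpow_le_exp_mul_sub_one {x y : ℝ} (hx : 0 < x) (hy : 0 ≤ y) :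
    x ^ y ≤ exp (y * (x - 1)) := by
  rw [rpow_def_of_pos hx, mul_comm]
  exact exp_le_exp.2 (mul_le_mul_of_nonneg_left (log_le_sub_one_of_pos hx) hy)

lemma one_add_pow_sub_one_le {θ : ℝ} (hθ0 : 0 ≤ θ) (hθ1 : θ ≤ 1) (k : ℕ) :
    (1 + θ) ^ k - 1 ≤ (2 ^ k - 1) * θ := by
  have h1 := geom_sum_mul (1 + θ) k
  have h2 := geom_sum_mul (2 : ℝ) k
  rw [add_sub_cancel_left] at h1
  norm_num at h2
  rw [← h1, ← h2]
  gcongr with i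
  linarith

lemma choose_mul_pow_mul_pow_le_exp {n S : ℕ} (hS : S ≤ n) {q : ℝ} (hq0 : 0 ≤ q) (hq1 : q ≤ 1)
    (θ : ℝ) :
    (n.choose S : ℝ) * q ^ S * (1 - q) ^ (n - S) ≤ exp (-θ * S + n * q * (exp θ - 1)) := by
  have hterm : (q * exp θ) ^ S * (1 - q) ^ (n - S) * n.choose S ≤ (q * exp θ + (1 - q)) ^ n := by
    rw [add_pow]
    exact Finset.single_le_sum (f := fun j => (q * exp θ) ^ j * (1 - q) ^ (n - j) * n.choose j)
      (fun j _ => by have := exp_pos θ; positivity) (Finset.mem_range.2 (Nat.lt_succ_of_le hS))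
  have hmgf : (q * exp θ + (1 - q)) ^ n ≤ exp (n * q * (exp θ - 1)) := by
    rw [mul_assoc, exp_nat_mul]
    gcongr
    linarith [add_one_le_exp (q * (exp θ - 1)), mul_sub_one q (exp θ)]
  calc (n.choose S : ℝ) * q ^ S * (1 - q) ^ (n - S)
      = exp (-θ * S) * ((q * exp θ) ^ S * (1 - q) ^ (n - S) * n.choose S) := by
        have h : exp (-θ * S) * exp θ ^ S = 1 := by
          rw [← exp_nat_mul, ← exp_add, show -θ * S + S * θ = 0 by ring, exp_zero]
        linear_combination (-(q ^ S * (1 - q) ^ (n - S) * n.choose S)) * h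
    _ ≤ exp (-θ * S) * exp (n * q * (exp θ - 1)) := by gcongr; exact hterm.trans hmgf
    _ = exp (-θ * S + n * q * (exp θ - 1)) := (exp_add _ _).symm

lemma choose_mul_pow_mul_pow_le_exp_of_le {n S : ℕ} (hS : S ≤ n) {q θ : ℝ} (hq0 : 0 ≤ q)
    (hq1 : q ≤ 1) (hθ0 : 0 ≤ θ) (hθ1 : θ ≤ 1) (hSθ : (1 + θ) * (n * q) - 1 ≤ S) :
    (n.choose S : ℝ) * q ^ S * (1 - q) ^ (n - S) ≤ exp (θ - (1 / 2 - θ) * θ ^ 2 * (n * q)) := by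
  refine (choose_mul_pow_mul_pow_le_exp hS hq0 hq1 θ).trans (exp_le_exp.2 ?_)
  have hμ : 0 ≤ n * q := by positivity
  have h1 := mul_le_mul_of_nonneg_left hSθ hθ0
  have h2 := mul_le_mul_of_nonneg_left
    (sub_le_iff_le_add'.2 (exp_le_one_add_add_sq_div_two_add_pow_three hθ0 hθ1)) hμ
  nlinarith

lemma tendsto_rpow_div_log_sq_atTop {b : ℝ} (hb : 0 < b) :
    Tendsto (fun x : ℝ => x ^ b / log x ^ 2) atTop atTop := by
  have h := (isLittleO_log_rpow_rpow_atTop 2 hb).tendsto_div_nhds_zero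
  simp only [rpow_two] at h
  have hpos : ∀ᶠ x : ℝ in atTop, 0 < log x ^ 2 / x ^ b := by
    filter_upwards [eventually_gt_atTop 1] with x hx
    have := log_pos hx
    have := rpow_pos_of_pos (zero_lt_one.trans hx) b
    positivity
  refine (tendsto_nhdsWithin_iff.2 ⟨h, hpos⟩).inv_tendsto_nhdsGT_zero.congr fun x => ?_
  simp only [Pi.inv_apply, inv_div]

section ModelRB

variable {α p r lam : ℝ} {k n : ℕ}

lemma tendsto_dRB_atTop (hα : 0 < α) : Tendsto (dRB α) atTop atTop :=
  (tendsto_rpow_atTop hα).comp tendsto_natCast_atTop_atTop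

lemma log_dRB (n : ℕ) : log (dRB α n) = α * log n := by
  rcases n.eq_zero_or_pos with rfl | hn
  · rcases eq_or_ne α 0 with rfl | hα <;> simp [dRB, *]
  · exact log_rpow (Nat.cast_pos.2 hn) α

lemma tendsto_rpow_div_log_dRB_sq_atTop (hα : 0 < α) {b : ℝ} (hb : 0 < b) :
    Tendsto (fun n : ℕ => (n : ℝ) ^ b / log (dRB α n) ^ 2) atTop atTop := by
  refine (((tendsto_rpow_div_log_sq_atTop hb).comp tendsto_natCast_atTop_atTop).atTop_div_const
    (by positivity : 0 < α ^ 2)).congr fun n => ?_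
  simp only [Function.comp, log_dRB, mul_pow]
  field_simp

noncomputable def tiltRB (α lam : ℝ) (k n : ℕ) : ℝ :=
  lam * (n : ℝ) ^ ((k : ℝ) * α - 1) / log (dRB α n)

lemma eta1_eq (hn : 0 < n) : eta1 α lam k n = (1 + tiltRB α lam k n) / dRB α n := by
  have hn' : (0 : ℝ) < n := Nat.cast_pos.2 hn
  have h : (n : ℝ) ^ ((k : ℝ) * α - 1) = (n : ℝ) ^ α / (n : ℝ) ^ (1 - ((k : ℝ) - 1) * α) := by
    rw [← rpow_sub hn']; ring_nf
  have : (n : ℝ) ^ α ≠ 0 := (rpow_pos_of_pos hn' α).ne'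
  have : (n : ℝ) ^ (1 - ((k : ℝ) - 1) * α) ≠ 0 := (rpow_pos_of_pos hn' _).ne'
  rw [eta1, tiltRB, dRB, h, add_div]
  field_simp

lemma tiltRB_sq_mul (hn : 0 < n) :
    tiltRB α lam k n ^ 2 * (n / dRB α n) =
      lam ^ 2 * ((n : ℝ) ^ ((2 * (k : ℝ) - 1) * α - 1) / log (dRB α n) ^ 2) := by
  have hn' : (0 : ℝ) < n := Nat.cast_pos.2 hn
  have h : (n : ℝ) ^ ((k : ℝ) * α - 1) * (n : ℝ) ^ ((k : ℝ) * α - 1) * n =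
      (n : ℝ) ^ ((2 * (k : ℝ) - 1) * α - 1) * (n : ℝ) ^ α := by
    rw [← rpow_add hn', ← rpow_add_one hn'.ne', ← rpow_add hn']; ring_nf
  have hpow : ((n : ℝ) ^ ((k : ℝ) * α - 1)) ^ 2 * n / dRB α n =
      (n : ℝ) ^ ((2 * (k : ℝ) - 1) * α - 1) := by
    have : (n : ℝ) ^ α ≠ 0 := (rpow_pos_of_pos hn' α).ne'
    rw [dRB, div_eq_iff this, sq]
    exact h
  calc tiltRB α lam k n ^ 2 * (n / dRB α n)
      = lam ^ 2 * (((n : ℝ) ^ ((k : ℝ) * α - 1)) ^ 2 * n / dRB α n) / log (dRB α n) ^ 2 := by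
        rw [tiltRB]; ring
    _ = _ := by rw [hpow]; ring

lemma tiltRB_mul_dRB_rpow_neg (hn : 0 < n) :
    tiltRB α lam k n * dRB α n ^ (-(k : ℝ)) = lam / (n * log (dRB α n)) := by
  have hn' : (0 : ℝ) < n := Nat.cast_pos.2 hn
  have h : (n : ℝ) ^ ((k : ℝ) * α - 1) * dRB α n ^ (-(k : ℝ)) = (n : ℝ)⁻¹ := by
    rw [dRB, ← rpow_mul hn'.le, ← rpow_add hn', ← rpow_neg_one]; ring_nf
  rw [tiltRB, div_mul_eq_mul_div, mul_assoc, h]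
  field_simp

lemma tiltRB_nonneg (hlam : 0 ≤ lam) (hd : 1 ≤ dRB α n) : 0 ≤ tiltRB α lam k n :=
  div_nonneg (mul_nonneg hlam (rpow_nonneg n.cast_nonneg _)) (log_nonneg hd)

lemma tiltRB_le (hkα : (k : ℝ) * α ≤ 1) (hlam : 0 ≤ lam) (hn : 0 < n) (hd : 1 ≤ dRB α n) :
    tiltRB α lam k n ≤ lam / log (dRB α n) := by
  have hpow : (n : ℝ) ^ ((k : ℝ) * α - 1) ≤ 1 :=
    rpow_le_one_of_one_le_of_nonpos (Nat.one_le_cast.2 hn) (by linarith)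
  have := log_nonneg hd
  unfold tiltRB
  gcongr
  exact mul_le_of_le_one_right hlam hpow

lemma tendsto_tiltRB_zero (hα : 0 < α) (hkα : (k : ℝ) * α ≤ 1) (hlam : 0 ≤ lam) :
    Tendsto (tiltRB α lam k) atTop (nhds 0) := by
  have hd := (tendsto_dRB_atTop hα).eventually_ge_atTop 1
  refine squeeze_zero' (g := fun n => lam / log (dRB α n))
    (hd.mono fun n hn => tiltRB_nonneg hlam hn) ?_
    (tendsto_const_nhds.div_atTop (tendsto_log_atTop.comp (tendsto_dRB_atTop hα)))
  filter_upwards [hd, eventually_gt_atTop 0] with n hd hn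
  exact tiltRB_le hkα hlam hn hd

lemma dRB_rpow_neg_nonneg : 0 ≤ dRB α n ^ (-(k : ℝ)) :=
  rpow_nonneg (rpow_nonneg n.cast_nonneg α) _

lemma fRB_pos (hp0 : 0 ≤ p) (hδ : dRB α n ^ (-(k : ℝ)) < 1 - p) {s : ℝ} (hs : 0 ≤ s) :
    0 < fRB α p k n s := by
  have hδ0 : 0 ≤ dRB α n ^ (-(k : ℝ)) := dRB_rpow_neg_nonneg
  have hp1 : 0 < 1 - p := hδ0.trans_lt hδ
  have hD : 0 < 1 - dRB α n ^ (-(k : ℝ)) := by linarith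
  have hc : p / (1 - p) * dRB α n ^ (-(k : ℝ)) < 1 - dRB α n ^ (-(k : ℝ)) := by
    rw [div_mul_eq_mul_div, div_lt_iff₀ hp1]; nlinarith
  have hsk : 0 ≤ p / (1 - p) * s ^ k := by positivity
  have : -1 < p / (1 - p) * (s ^ k - dRB α n ^ (-(k : ℝ))) / (1 - dRB α n ^ (-(k : ℝ))) := by
    rw [lt_div_iff₀ hD]; linarith
  rw [fRB]; linarith

lemma fRB_sub_one_le (hp0 : 0 ≤ p) (hp1 : p < 1) (hd : 0 < dRB α n)
    (hδ : dRB α n ^ (-(k : ℝ)) ≤ 1 / 2) {s θ : ℝ} (hs0 : 0 ≤ s) (hθ0 : 0 ≤ θ) (hθ1 : θ ≤ 1)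
    (hs : s ≤ (1 + θ) / dRB α n) :
    fRB α p k n s - 1 ≤ 2 * (p / (1 - p)) * (2 ^ k - 1) * (θ * dRB α n ^ (-(k : ℝ))) := by
  have hpow : s ^ k ≤ (1 + θ) ^ k * dRB α n ^ (-(k : ℝ)) := by
    rw [rpow_neg hd.le, rpow_natCast, ← div_eq_mul_inv, ← div_pow]
    gcongr
  have hδ0 : 0 ≤ dRB α n ^ (-(k : ℝ)) := dRB_rpow_neg_nonneg
  rw [fRB, add_sub_cancel_left, div_le_iff₀ (by linarith)]
  generalize dRB α n ^ (-(k : ℝ)) = δ at *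
  have hc : 0 ≤ p / (1 - p) := div_nonneg hp0 (by linarith)
  have hsk : s ^ k - δ ≤ (2 ^ k - 1) * θ * δ := by
    nlinarith [one_add_pow_sub_one_le hθ0 hθ1 k]
  have hu : 0 ≤ (2 ^ k - 1) * θ * δ := by
    have : (1 : ℝ) ≤ 2 ^ k := one_le_pow₀ (by norm_num)
    have := mul_nonneg (sub_nonneg.2 this) hθ0
    positivity
  nlinarith [mul_le_mul_of_nonneg_left hsk hc,
    mul_nonneg (mul_nonneg hc hu) (by linarith : 0 ≤ 1 - 2 * δ)]

lemma WRB_le_exp (hp0 : 0 ≤ p) (hp1 : p < 1) (hr : 0 ≤ r) (hn : 0 < n) (hd : 1 < dRB α n)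
    (hδ : dRB α n ^ (-(k : ℝ)) ≤ (1 - p) / 2) (hθ0 : 0 ≤ tiltRB α lam k n)
    (hθ1 : tiltRB α lam k n ≤ 1) {S : ℕ} (hS : (S : ℝ) / n ≤ (1 + tiltRB α lam k n) / dRB α n) :
    WRB α p r k n S ≤ exp (2 * r * (p / (1 - p)) * (2 ^ k - 1) * lam) := by
  have hL : 0 < log (dRB α n) := log_pos hd
  have hm : 0 ≤ r * mRB α n := mul_nonneg hr (mul_nonneg n.cast_nonneg hL.le)
  have hs0 : 0 ≤ (S : ℝ) / n := by positivity
  calc WRB α p r k n S ≤ exp (r * mRB α n * (fRB α p k n (S / n) - 1)) :=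
        rpow_le_exp_mul_sub_one (fRB_pos hp0 (by linarith) hs0) hm
    _ ≤ exp (r * mRB α n *
          (2 * (p / (1 - p)) * (2 ^ k - 1) * (tiltRB α lam k n * dRB α n ^ (-(k : ℝ))))) := by
        gcongr
        exact fRB_sub_one_le hp0 hp1 (by linarith) (by linarith) hs0 hθ0 hθ1 hS
    _ = exp (2 * r * (p / (1 - p)) * (2 ^ k - 1) * lam) := by
        have : (n : ℝ) ≠ 0 := Nat.cast_ne_zero.2 hn.ne'
        rw [tiltRB_mul_dRB_rpow_neg hn, mRB]
        field_simp

lemma BRB_le_exp (hd : 1 ≤ dRB α n) {S : ℕ} (hSn : S ≤ n) {θ : ℝ} (hθ0 : 0 ≤ θ) (hθ1 : θ ≤ 1)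
    (hS : (1 + θ) * (n / dRB α n) - 1 ≤ S) :
    BRB α n S ≤ exp (θ - (1 / 2 - θ) * θ ^ 2 * (n / dRB α n)) := by
  rw [BRB, ← mul_one_div (n : ℝ)] at *
  exact choose_mul_pow_mul_pow_le_exp_of_le hSn (by positivity)
    (div_le_one_of_le₀ hd (by linarith)) hθ0 hθ1 hS

lemma BRB_nonneg (hd : 1 ≤ dRB α n) (S : ℕ) : 0 ≤ BRB α n S := by
  have : 1 / dRB α n ≤ 1 := div_le_one_of_le₀ hd (by linarith)
  have : 0 ≤ 1 - 1 / dRB α n := by linarith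
  unfold BRB
  positivity

lemma PhiRB_nonneg (hp0 : 0 ≤ p) (hd : 1 ≤ dRB α n) (hδ : dRB α n ^ (-(k : ℝ)) < 1 - p)
    (S : ℕ) : 0 ≤ PhiRB α p r k n S :=
  mul_nonneg (BRB_nonneg hd S) (rpow_nonneg (fRB_pos hp0 hδ (by positivity)).le _)

lemma PhiRB_floor_le (hp0 : 0 ≤ p) (hp1 : p < 1) (hr : 0 ≤ r) (hn : 0 < n) (hd : 2 ≤ dRB α n)
    (hδ : dRB α n ^ (-(k : ℝ)) ≤ (1 - p) / 2) (hθ0 : 0 ≤ tiltRB α lam k n)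
    (hθ1 : tiltRB α lam k n ≤ 1) :
    PhiRB α p r k n ⌊(n : ℝ) * eta1 α lam k n⌋₊ ≤
      exp (2 * r * (p / (1 - p)) * (2 ^ k - 1) * lam +
        (tiltRB α lam k n -
          (1 / 2 - tiltRB α lam k n) * tiltRB α lam k n ^ 2 * (n / dRB α n))) := by
  have hn' : (0 : ℝ) < n := Nat.cast_pos.2 hn
  have hmean : (n : ℝ) * eta1 α lam k n = (1 + tiltRB α lam k n) * (n / dRB α n) := by
    rw [eta1_eq hn]; ring
  have hmean_le : (1 + tiltRB α lam k n) * (n / dRB α n) ≤ 2 * (n / 2) := by gcongr; linarith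
  rw [hmean]
  set x := (1 + tiltRB α lam k n) * (n / dRB α n)
  have hS := Nat.floor_le (by positivity : 0 ≤ x)
  have hSn : ⌊x⌋₊ ≤ n := Nat.floor_le_of_le (hmean_le.trans_eq (by ring))
  have hSdiv : (⌊x⌋₊ : ℝ) / n ≤ (1 + tiltRB α lam k n) / dRB α n := by
    rw [div_le_iff₀ hn']
    exact hS.trans_eq (by ring)
  rw [PhiRB, add_comm, exp_add]
  exact mul_le_mul_of_nonneg (BRB_le_exp (by linarith) hSn hθ0 hθ1 (Nat.sub_one_lt_floor x).le)
    (WRB_le_exp hp0 hp1 hr hn (by linarith) hδ hθ0 hθ1 hSdiv) (BRB_nonneg (by linarith) _)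
    (exp_pos _).le

lemma PhiRB_floor_mul_exp_le {ε : ℝ} (hp0 : 0 ≤ p) (hp1 : p < 1) (hr : 0 ≤ r) (hn : 0 < n)
    (hd : 2 ≤ dRB α n) (hδ : dRB α n ^ (-(k : ℝ)) ≤ (1 - p) / 2) (hθ0 : 0 ≤ tiltRB α lam k n)
    (hθ1 : tiltRB α lam k n ≤ 1) (hθε : lam ^ 2 * tiltRB α lam k n ≤ ε / 2) :
    PhiRB α p r k n ⌊(n : ℝ) * eta1 α lam k n⌋₊ *
        exp ((lam ^ 2 / 2 - ε) * (n : ℝ) ^ ((2 * (k : ℝ) - 1) * α - 1) / log (dRB α n) ^ 2) ≤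
      exp (2 * r * (p / (1 - p)) * (2 ^ k - 1) * lam + 1 -
        ε / 2 * ((n : ℝ) ^ ((2 * (k : ℝ) - 1) * α - 1) / log (dRB α n) ^ 2)) := by
  have hA0 : 0 ≤ (n : ℝ) ^ ((2 * (k : ℝ) - 1) * α - 1) / log (dRB α n) ^ 2 := by positivity
  grw [PhiRB_floor_le hp0 hp1 hr hn hd hδ hθ0 hθ1, ← exp_add, mul_assoc _ (tiltRB α lam k n ^ 2),
    tiltRB_sq_mul hn]
  refine exp_le_exp.2 ?_
  linear_combination hθ1 + mul_le_mul_of_nonneg_right hθε hA0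

end ModelRB

theorem stmt8_general (α p r lam : ℝ) (k : ℕ) (hα : 0 < α) (hk : 2 ≤ k)
    (hp0 : 0 < p) (hp1 : p < 1) (hr0 : 0 < r)
    (hkα : (k : ℝ) * α ≤ 1) (hkα2 : (2 * (k : ℝ) - 1) * α > 1) (hlam : 0 < lam) :
    ∀ ε : ℝ, 0 < ε → ε < lam ^ 2 / 2 →
      Filter.Tendsto
        (fun n : ℕ => PhiRB α p r k n ⌊(n : ℝ) * eta1 α lam k n⌋₊ *
          Real.exp ((lam ^ 2 / 2 - ε) * (n : ℝ) ^ ((2 * (k : ℝ) - 1) * α - 1) /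
            Real.log (dRB α n) ^ 2))
        Filter.atTop (nhds 0) := by
  intro ε hε _
  have hd_lim := tendsto_dRB_atTop hα
  have hδ_lim : Tendsto (fun n => dRB α n ^ (-(k : ℝ))) atTop (nhds 0) :=
    (tendsto_rpow_neg_atTop (by positivity)).comp hd_lim
  have hθ := (tendsto_tiltRB_zero hα hkα hlam.le).eventually
    (ge_mem_nhds (lt_min one_pos (by positivity : 0 < ε / (2 * lam ^ 2))))
  have hA := tendsto_rpow_div_log_dRB_sq_atTop hα (by linarith : 0 < (2 * (k : ℝ) - 1) * α - 1)
  have hlim : Tendsto (fun n : ℕ => exp (2 * r * (p / (1 - p)) * (2 ^ k - 1) * lam + 1 -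
      ε / 2 * ((n : ℝ) ^ ((2 * (k : ℝ) - 1) * α - 1) / log (dRB α n) ^ 2))) atTop (nhds 0) :=
    tendsto_exp_atBot.comp <| (tendsto_atBot_add_const_left _ _ (tendsto_neg_atTop_atBot.comp
      (hA.const_mul_atTop (half_pos hε)))).congr fun n => (sub_eq_add_neg _ _).symm
  refine squeeze_zero' ?_ ?_ hlim
  · filter_upwards [hd_lim.eventually_ge_atTop 1,
      hδ_lim.eventually (gt_mem_nhds (sub_pos.2 hp1))] with n hd hδ
    exact mul_nonneg (PhiRB_nonneg hp0.le hd hδ _) (exp_pos _).le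
  filter_upwards [eventually_gt_atTop 0, hd_lim.eventually_ge_atTop 2,
    hδ_lim.eventually (ge_mem_nhds (half_pos (sub_pos.2 hp1))), hθ] with n hn hd hδ hθ
  have hθε : lam ^ 2 * tiltRB α lam k n ≤ ε / 2 := by
    have := (le_div_iff₀' (by positivity)).1 (hθ.trans (min_le_right _ _))
    linarith
  exact PhiRB_floor_mul_exp_le hp0.le hp1 hr0.le hn hd hδ (tiltRB_nonneg hlam.le (by linarith))
    (hθ.trans (min_le_left _ _)) hθε

/-- if kα ≤ 1 < (2k-1)α and λ > 0, then for every 0 < ε < λ²/2,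
Φ_n(⌊nη₁⌋) · exp((λ²/2 - ε) n^{(2k-1)α-1}/(ln d)²) → 0. -/
theorem stmt8 (α p r τ lam : ℝ) (k : ℕ) (hα : 0 < α) (hk : 2 ≤ k)
    (hp0 : 0 < p) (hp1 : p < 1) (hτ : τ = 1 / (1 - p)) (hr0 : 0 < r)
    (hkα : (k : ℝ) * α ≤ 1) (hkα2 : (2 * (k : ℝ) - 1) * α > 1) (hlam : 0 < lam) :
    ∀ ε : ℝ, 0 < ε → ε < lam ^ 2 / 2 →
      Filter.Tendsto
        (fun n : ℕ => PhiRB α p r k n ⌊(n : ℝ) * eta1 α lam k n⌋₊ *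
          Real.exp ((lam ^ 2 / 2 - ε) * (n : ℝ) ^ ((2 * (k : ℝ) - 1) * α - 1) /
            Real.log (dRB α n) ^ 2))
        Filter.atTop (nhds 0) :=
  stmt8_general α p r lam k hα hk hp0 hp1 hr0 hkα hkα2 hlam
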